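/- Let A, B, C be recursively enumerable sets forming a Slaman triple, i.e., A is noncomputable, C is not Turing reducible to B, and for every noncomputable r.e. set Y Turing reducible to A one has C Turing reducible to B ⊕ Y. Suppose X is a noncomputable r.e. set with X Turing reducible to A and X Turing reducible to B ⊕ C. Then for every noncomputable r.e. set W Turing reducible to X, one has X Turing reducible to B ⊕ W; that is, X and B form a strong minimal pair (in the sense of the cupping clause). -/

import Mathlib

open Nat

/-- Partial recursiveness relative to an oracle `O : ℕ →. ℕ`, mirroring `Nat.Partrec`. -/
inductive OracleRecursiveIn (O : ℕ →. ℕ) : (ℕ →. ℕ) → Prop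
  | zero : OracleRecursiveIn O (pure 0)
  | succ : OracleRecursiveIn O Nat.succ
  | left : OracleRecursiveIn O ↑fun n : ℕ => n.unpair.1
  | right : OracleRecursiveIn O ↑fun n : ℕ => n.unpair.2
  | oracle : OracleRecursiveIn O O
  | pair {f g} : OracleRecursiveIn O f → OracleRecursiveIn O g →
      OracleRecursiveIn O fun n => Nat.pair <$> f n <*> g n
  | comp {f g} : OracleRecursiveIn O f → OracleRecursiveIn O g →
      OracleRecursiveIn O fun n => g n >>= f
  | prec {f g} : OracleRecursiveIn O f → OracleRecursiveIn O g →
      OracleRecursiveIn O (Nat.unpaired fun a n =>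
        n.rec (f a) fun y IH => do let i ← IH; g (Nat.pair a (Nat.pair y i)))
  | rfind {f} : OracleRecursiveIn O f →
      OracleRecursiveIn O fun a => Nat.rfind fun n => (fun m => m = 0) <$> f (Nat.pair a n)

open Classical in
/-- The characteristic function of a set of naturals, as a partial function. -/
noncomputable def charFun (A : Set ℕ) : ℕ →. ℕ :=
  fun n => Part.some (if n ∈ A then 1 else 0)

/-- Turing reducibility between sets of natural numbers: the characteristic function of `A`
is partial recursive relative to the characteristic function of `B`. -/
def SetTuringReducible (A B : Set ℕ) : Prop :=
  OracleRecursiveIn (charFun B) (charFun A)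

/-- The computable join `A ⊕ B = {2n : n ∈ A} ∪ {2n+1 : n ∈ B}`. -/
def join (A B : Set ℕ) : Set ℕ :=
  {k | (∃ n ∈ A, k = 2 * n) ∨ ∃ n ∈ B, k = 2 * n + 1}


theorem OracleRecursiveIn.of_partrec {O : ℕ →. ℕ} {f : ℕ →. ℕ} (hf : Nat.Partrec f) :
    OracleRecursiveIn O f := by
  induction hf with
  | zero => exact .zero
  | succ => exact .succ
  | left => exact .left
  | right => exact .right
  | pair _ _ ih1 ih2 => exact .pair ih1 ih2
  | comp _ _ ih1 ih2 => exact .comp ih1 ih2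
  | prec _ _ ih1 ih2 => exact .prec ih1 ih2
  | rfind _ ih => exact .rfind ih

theorem OracleRecursiveIn.trans' {O g f : ℕ →. ℕ} (hf : OracleRecursiveIn g f) (hg : OracleRecursiveIn O g) :
    OracleRecursiveIn O f := by
  induction hf with
  | zero => exact .zero
  | succ => exact .succ
  | left => exact .left
  | right => exact .right
  | oracle => exact hg
  | pair _ _ ih1 ih2 => exact .pair ih1 ih2
  | comp _ _ ih1 ih2 => exact .comp ih1 ih2
  | prec _ _ ih1 ih2 => exact .prec ih1 ih2
  | rfind _ ih => exact .rfind ih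

theorem SetTuringReducible.trans {A B C : Set ℕ} (h1 : SetTuringReducible A B)
    (h2 : SetTuringReducible B C) : SetTuringReducible A C :=
  OracleRecursiveIn.trans' h1 h2

theorem mem_join_iff {A B : Set ℕ} {n : ℕ} :
    n ∈ join A B ↔ if n % 2 = 0 then n / 2 ∈ A else n / 2 ∈ B := by
  constructor
  · rintro (⟨m, hm, rfl⟩ | ⟨m, hm, rfl⟩)
    · have h1 : 2 * m % 2 = 0 := by omega
      have h2 : 2 * m / 2 = m := by omega
      simp [h1, h2, hm]
    · have h1 : (2 * m + 1) % 2 = 1 := by omega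
      have h2 : (2 * m + 1) / 2 = m := by omega
      simp [h1, h2, hm]
  · intro h
    by_cases hp : n % 2 = 0
    · rw [if_pos hp] at h
      exact Or.inl ⟨n / 2, h, by omega⟩
    · rw [if_neg hp] at h
      exact Or.inr ⟨n / 2, h, by omega⟩

theorem two_mul_mem_join {A B : Set ℕ} {n : ℕ} : 2 * n ∈ join A B ↔ n ∈ A := by
  rw [mem_join_iff]
  have h1 : 2 * n % 2 = 0 := by omega
  have h2 : 2 * n / 2 = n := by omega
  rw [if_pos h1, h2]

theorem two_mul_add_one_mem_join {A B : Set ℕ} {n : ℕ} : 2 * n + 1 ∈ join A B ↔ n ∈ B := by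
  rw [mem_join_iff]
  have h1 : ¬((2 * n + 1) % 2 = 0) := by omega
  have h2 : (2 * n + 1) / 2 = n := by omega
  rw [if_neg h1, h2]

theorem recursiveIn_charFun_comp {O : ℕ →. ℕ} {A : Set ℕ} {g : ℕ → ℕ}
    (hA : OracleRecursiveIn O (charFun A)) (hg : Computable g) :
    OracleRecursiveIn O (fun n => charFun A (g n)) := by
  have hgp : Nat.Partrec (↑g : ℕ →. ℕ) := Partrec.nat_iff.mp hg
  have := OracleRecursiveIn.comp hA (OracleRecursiveIn.of_partrec (O := O) hgp)
  have e : (fun n => charFun A (g n)) = fun n => (↑g : ℕ →. ℕ) n >>= charFun A :=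
    funext fun n => (Part.bind_some _ _).symm
  rw [e]
  exact this

theorem twoMul_computable : Computable (fun n : ℕ => 2 * n) :=
  (Primrec.nat_mul.comp (Primrec.const 2) Primrec.id).to_comp

theorem twoMulAddOne_computable : Computable (fun n : ℕ => 2 * n + 1) :=
  (Primrec.succ.comp (Primrec.nat_mul.comp (Primrec.const 2) Primrec.id)).to_comp

theorem left_reducible_join {A B : Set ℕ} : SetTuringReducible A (join A B) := by
  have h := recursiveIn_charFun_comp (O := charFun (join A B)) (A := join A B)
    (g := fun n => 2 * n) OracleRecursiveIn.oracle twoMul_computable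
  have heq : (fun n => charFun (join A B) (2 * n)) = charFun A := by
    funext n
    simp only [charFun]
    classical
    exact congrArg Part.some (if_congr two_mul_mem_join rfl rfl)
  rwa [heq] at h

theorem right_reducible_join {A B : Set ℕ} : SetTuringReducible B (join A B) := by
  have h := recursiveIn_charFun_comp (O := charFun (join A B)) (A := join A B)
    (g := fun n => 2 * n + 1) OracleRecursiveIn.oracle twoMulAddOne_computable
  have heq : (fun n => charFun (join A B) (2 * n + 1)) = charFun B := by
    funext n
    simp only [charFun]
    classical
    exact congrArg Part.some (if_congr two_mul_add_one_mem_join rfl rfl)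
  rwa [heq] at h

/-- The selector `F (pair n (pair a b)) = if n % 2 = 0 then a else b`. -/
noncomputable def joinSel : ℕ → ℕ := fun k =>
  if k.unpair.1 % 2 = 0 then k.unpair.2.unpair.1 else k.unpair.2.unpair.2

theorem joinSel_computable : Computable joinSel := by
  have hu1 : Primrec (fun k : ℕ => k.unpair.1) := Primrec.fst.comp Primrec.unpair
  have hu2 : Primrec (fun k : ℕ => k.unpair.2) := Primrec.snd.comp Primrec.unpair
  have hmod : Primrec (fun k : ℕ => k.unpair.1 % 2) :=
    Primrec.nat_mod.comp hu1 (Primrec.const 2)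
  exact Primrec.to_comp (Primrec.ite
    (Primrec.eq.comp hmod (Primrec.const 0))
    (hu1.comp hu2) (hu2.comp hu2))

theorem recursiveIn_join {O : ℕ →. ℕ} {A B : Set ℕ}
    (hA : OracleRecursiveIn O (charFun A)) (hB : OracleRecursiveIn O (charFun B)) :
    OracleRecursiveIn O (charFun (join A B)) := by
  have hdiv : Computable (fun n : ℕ => n / 2) :=
    (Primrec.nat_div.comp Primrec.id (Primrec.const 2)).to_comp
  have h1 : OracleRecursiveIn O (fun n => charFun A (n / 2)) :=
    recursiveIn_charFun_comp hA hdiv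
  have h2 : OracleRecursiveIn O (fun n => charFun B (n / 2)) :=
    recursiveIn_charFun_comp hB hdiv
  have hid : OracleRecursiveIn O (↑(fun n : ℕ => n) : ℕ →. ℕ) :=
    OracleRecursiveIn.of_partrec (Partrec.nat_iff.mp Computable.id)
  have hp : OracleRecursiveIn O (fun n => Nat.pair <$> charFun A (n / 2) <*> charFun B (n / 2)) :=
    OracleRecursiveIn.pair h1 h2
  have hq : OracleRecursiveIn O (fun n =>
      Nat.pair <$> (↑(fun n : ℕ => n) : ℕ →. ℕ) n <*>
        (Nat.pair <$> charFun A (n / 2) <*> charFun B (n / 2))) :=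
    OracleRecursiveIn.pair hid hp
  have hsel : OracleRecursiveIn O (↑joinSel : ℕ →. ℕ) :=
    OracleRecursiveIn.of_partrec (Partrec.nat_iff.mp joinSel_computable)
  have hfin := OracleRecursiveIn.comp hsel hq
  have heq : (fun n => (Nat.pair <$> (↑(fun n : ℕ => n) : ℕ →. ℕ) n <*>
        (Nat.pair <$> charFun A (n / 2) <*> charFun B (n / 2))) >>= (↑joinSel : ℕ →. ℕ))
      = charFun (join A B) := by
    funext n
    simp only [charFun, PFun.coe_val, Part.map_some, Seq.seq, Part.bind_some, joinSel,
      Nat.unpair_pair]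
    congr 1
    classical
    by_cases hp2 : n % 2 = 0
    · have hmem : n ∈ join A B ↔ n / 2 ∈ A := by rw [mem_join_iff, if_pos hp2]
      refine Eq.trans ?_ (congrArg Part.some (if_congr hmem rfl rfl)).symm
      simp [joinSel, Seq.seq, hp2]
      refine (Part.bind_some _ _).trans ?_
      simp [PFun.coe_val, joinSel, hp2]
    · have hmem : n ∈ join A B ↔ n / 2 ∈ B := by rw [mem_join_iff, if_neg hp2]
      refine Eq.trans ?_ (congrArg Part.some (if_congr hmem rfl rfl)).symm
      simp [joinSel, Seq.seq, hp2]
      refine (Part.bind_some _ _).trans ?_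
      simp [PFun.coe_val, joinSel, hp2]
  rwa [heq] at hfin

/-- In a Slaman triple `(A, B, C)`, a noncomputable r.e. set `X` below both `A` and
`B ⊕ C` would form a strong minimal pair with `B` (in the sense of the cupping clause). -/
theorem slaman_triple_strong_minimal_pair (A B C X : Set ℕ)
    (hA : REPred (· ∈ A)) (hB : REPred (· ∈ B)) (hC : REPred (· ∈ C))
    (hAnc : ¬ComputablePred (· ∈ A))
    (hCB : ¬SetTuringReducible C B)
    (hcup : ∀ Y : Set ℕ, REPred (· ∈ Y) → ¬ComputablePred (· ∈ Y) →
      SetTuringReducible Y A → SetTuringReducible C (join B Y))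
    (hX : REPred (· ∈ X)) (hXnc : ¬ComputablePred (· ∈ X))
    (hXA : SetTuringReducible X A) (hXBC : SetTuringReducible X (join B C)) :
    ∀ W : Set ℕ, REPred (· ∈ W) → ¬ComputablePred (· ∈ W) →
      SetTuringReducible W X → SetTuringReducible X (join B W) := by
  intro W hWre hWnc hWX
  have hWA : SetTuringReducible W A := hWX.trans hXA
  have hCBW : SetTuringReducible C (join B W) := hcup W hWre hWnc hWA
  have hBBW : SetTuringReducible B (join B W) := left_reducible_join
  have hjj : OracleRecursiveIn (charFun (join B W)) (charFun (join B C)) :=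
    recursiveIn_join hBBW hCBW
  exact hXBC.trans hjj
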